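/- arXiv:2310.10791 — 2 statements merged into one kernel-verified Lean document; each statement's English description precedes it below -/
import Mathlib

section
/- Let ⟨Q,B⟩_F ≥ ξ·‖Q‖_F‖B‖_F with ξ ∈ (0,1], and let ΔB satisfy entrywise sign(ΔB_{ab}) = sign(B_{ab}) (or ΔB_{ab}=0 when B_{ab}=0) and |ΔB_{ab}| ≤ β|B_{ab}| for β ≥ 0. Then ⟨Q, B + ΔB⟩_F ≥ (1 − (β/2)(1/ξ − 1))·⟨Q, B⟩_F. -/
open Matrix

noncomputable def frobNorm {N : ℕ} (A : Matrix (Fin N) (Fin N) ℝ) : ℝ :=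
  Real.sqrt (∑ a, ∑ b, (A a b) ^ 2)

/-!
Entrywise, a perturbation `d` of `b` with the sign of `b` and `|d| ≤ β |b|` can only lower
`q b` where `q b < 0`, and there by at most `β |q b|`. Hence `⟨q, d⟩ ≥ -β N`, where
`N = (∑ |q b| - ⟨q, b⟩) / 2` is the total negative mass of `q b`. Cauchy–Schwarz and the
alignment hypothesis give `∑ |q b| ≤ ‖q‖ ‖b‖ ≤ ⟨q, b⟩ / ξ`, so `N ≤ (1/ξ - 1) ⟨q, b⟩ / 2`.
-/

lemma half_mul_sub_abs_le_mul_of_sign {q b d β : ℝ} (hsign : 0 ≤ d * b)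
    (hmag : |d| ≤ β * |b|) : β / 2 * (q * b - |q * b|) ≤ q * d := by
  rcases le_or_gt 0 (q * b) with hqb | hqb
  · rw [abs_of_nonneg hqb, sub_self, mul_zero]
    rcases eq_or_ne b 0 with rfl | hb
    · simp [show d = 0 by simpa using hmag]
    · -- `(q d) b² = (q b)(d b) ≥ 0`
      have hb2 : 0 < b ^ 2 := by positivity
      nlinarith [mul_nonneg hqb hsign]
  · calc β / 2 * (q * b - |q * b|) = -(β * (|q| * |b|)) := by
          rw [abs_of_neg hqb, ← abs_mul, abs_of_neg hqb]; ring
      _ ≤ -(|q| * |d|) := by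
          rw [neg_le_neg_iff, mul_left_comm]
          exact mul_le_mul_of_nonneg_left hmag (abs_nonneg q)
      _ ≤ q * d := by rw [← abs_mul]; exact neg_abs_le _

lemma sum_abs_mul_le_sqrt_mul_sqrt {ι : Type*} (s : Finset ι) (f g : ι → ℝ) :
    ∑ i ∈ s, |f i * g i| ≤ √(∑ i ∈ s, f i ^ 2) * √(∑ i ∈ s, g i ^ 2) := by
  simpa only [abs_mul, sq_abs] using
    Real.sum_mul_le_sqrt_mul_sqrt s (fun i => |f i|) (fun i => |g i|)

section Perturbation

variable {ι : Type*} [Fintype ι] {q b d : ι → ℝ} {ξ β : ℝ}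

lemma half_mul_sum_sub_sum_abs_le_sum_mul (hsign : ∀ i, 0 ≤ d i * b i)
    (hmag : ∀ i, |d i| ≤ β * |b i|) :
    β / 2 * (∑ i, q i * b i - ∑ i, |q i * b i|) ≤ ∑ i, q i * d i := by
  rw [← Finset.sum_sub_distrib, Finset.mul_sum]
  exact Finset.sum_le_sum fun i _ => half_mul_sub_abs_le_mul_of_sign (hsign i) (hmag i)

lemma sum_abs_mul_le_div_of_aligned (hξ : 0 < ξ)
    (halign : ξ * (√(∑ i, q i ^ 2) * √(∑ i, b i ^ 2)) ≤ ∑ i, q i * b i) :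
    ∑ i, |q i * b i| ≤ (∑ i, q i * b i) / ξ := by
  rw [le_div_iff₀ hξ, mul_comm]
  exact (mul_le_mul_of_nonneg_left (sum_abs_mul_le_sqrt_mul_sqrt _ q b) hξ.le).trans halign

theorem mul_sum_mul_le_sum_mul_add_of_aligned (hξ : 0 < ξ) (hβ : 0 ≤ β)
    (halign : ξ * (√(∑ i, q i ^ 2) * √(∑ i, b i ^ 2)) ≤ ∑ i, q i * b i)
    (hsign : ∀ i, 0 ≤ d i * b i) (hmag : ∀ i, |d i| ≤ β * |b i|) :
    (1 - β / 2 * (1 / ξ - 1)) * ∑ i, q i * b i ≤ ∑ i, q i * (b i + d i) := by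
  have hpert := half_mul_sum_sub_sum_abs_le_sum_mul (q := q) hsign hmag
  have habs := mul_le_mul_of_nonneg_left (sum_abs_mul_le_div_of_aligned hξ halign) hβ
  calc (1 - β / 2 * (1 / ξ - 1)) * ∑ i, q i * b i
      = ∑ i, q i * b i + β / 2 * (∑ i, q i * b i - (∑ i, q i * b i) / ξ) := by ring
    _ ≤ ∑ i, q i * b i + ∑ i, q i * d i := by linarith
    _ = ∑ i, q i * (b i + d i) := by simp only [mul_add, Finset.sum_add_distrib]

end Perturbation

theorem stmt_12 {N : ℕ} (Q B ΔB : Matrix (Fin N) (Fin N) ℝ) (ξ β : ℝ)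
    (hξ : ξ ∈ Set.Ioc (0 : ℝ) 1) (hβ : 0 ≤ β)
    (halign : ξ * (frobNorm Q * frobNorm B) ≤ ∑ a, ∑ b, Q a b * B a b)
    (hsign : ∀ a b, 0 ≤ ΔB a b * B a b)
    (hmag : ∀ a b, |ΔB a b| ≤ β * |B a b|) :
    (1 - β / 2 * (1 / ξ - 1)) * (∑ a, ∑ b, Q a b * B a b) ≤
      ∑ a, ∑ b, Q a b * (B a b + ΔB a b) := by
  simp only [frobNorm, ← Fintype.sum_prod_type'] at halign ⊢
  exact mul_sum_mul_le_sum_mul_add_of_aligned (q := fun p : Fin N × Fin N => Q p.1 p.2)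
    hξ.1 hβ halign (fun p => hsign p.1 p.2) (fun p => hmag p.1 p.2)
end

section
/- In the setting of linear gradient descent h^{(t+1)} = h^{(t)} − η Jᵀ(Jh^{(t)} − y) with Θ = JJᵀ of rank r, eigenvalues λ₁,…,λ_r > 0, 0 < ηλ_ℓ < 1 for all ℓ, the limit h^{(∞)} = lim_{t→∞} h^{(t)} exists and satisfies h^{(∞)} − h^{(0)} = Jᵀ Θ† (y − J h^{(0)}), where Θ† is the Moore–Penrose pseudoinverse of Θ; consequently if J h^{(0)} = 0 then ‖h^{(∞)} − h^{(0)}‖₂² = yᵀ Θ† y. -/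
open Matrix Filter

set_option maxHeartbeats 1000000 in
theorem stmt_15 {N p : ℕ} (J : Matrix (Fin N) (Fin p) ℝ) (hrank : J.rank = p)
    (y : Fin N → ℝ) (η : ℝ) (hη : 0 < η)
    (heig : ∀ μ ∈ spectrum ℝ (J * Jᵀ), μ ≠ 0 → 0 < η * μ ∧ η * μ < 1)
    (h : ℕ → Fin p → ℝ)
    (hgd : ∀ t, h (t + 1) = h t - η • (Jᵀ *ᵥ (J *ᵥ h t - y)))
    -- P is the Moore–Penrose pseudoinverse of Θ = J * Jᵀ
    (P : Matrix (Fin N) (Fin N) ℝ)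
    (hP1 : (J * Jᵀ) * P * (J * Jᵀ) = J * Jᵀ) (hP2 : P * (J * Jᵀ) * P = P)
    (hP3 : ((J * Jᵀ) * P)ᵀ = (J * Jᵀ) * P) (hP4 : (P * (J * Jᵀ))ᵀ = P * (J * Jᵀ)) :
    Filter.Tendsto h Filter.atTop (nhds (h 0 + Jᵀ *ᵥ (P *ᵥ (y - J *ᵥ h 0)))) ∧
      (J *ᵥ h 0 = 0 → ∑ i, (Jᵀ *ᵥ (P *ᵥ (y - J *ᵥ h 0))) i ^ 2 = y ⬝ᵥ (P *ᵥ y)) := by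
  set Θ : Matrix (Fin N) (Fin N) ℝ := J * Jᵀ with hΘdef
  have hΘsym : Θᵀ = Θ := by rw [hΘdef, transpose_mul, transpose_transpose]
  -- symmetry and commutation of P
  have hPΘ' : Pᵀ * Θ = Θ * P := by
    calc Pᵀ * Θ = (Θ * P)ᵀ := by rw [transpose_mul, hΘsym]
    _ = Θ * P := hP3
  have hΘP' : Θ * Pᵀ = P * Θ := by
    calc Θ * Pᵀ = (P * Θ)ᵀ := by rw [transpose_mul, hΘsym]
    _ = P * Θ := hP4
  have e1 : Θ * Pᵀ * Θ = Θ := by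
    calc Θ * Pᵀ * Θ = (Θ * P * Θ)ᵀ := by simp [transpose_mul, hΘsym, Matrix.mul_assoc]
    _ = Θ := by rw [hP1, hΘsym]
  have e2 : Θ * (Θ * P) = Θ := by
    rw [← hPΘ', ← Matrix.mul_assoc, hΘP']
    calc P * Θ * Θ = (Θ * Pᵀ) * Θ := by rw [hΘP']
    _ = Θ := e1
  have hcomm : Θ * P = P * Θ := by
    calc Θ * P = (Θ * Pᵀ * Θ) * P := by rw [e1]
    _ = (Θ * Pᵀ) * (Θ * P) := by rw [Matrix.mul_assoc]
    _ = (P * Θ) * (Θ * P) := by rw [hΘP']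
    _ = P * (Θ * (Θ * P)) := by rw [Matrix.mul_assoc]
    _ = P * Θ := by rw [e2]
  have hPsym : P = Pᵀ := by
    calc P = P * Θ * P := hP2.symm
    _ = (Pᵀ * Θ) * P := by rw [hPΘ', hcomm]
    _ = Pᵀ * (Θ * P) := by rw [Matrix.mul_assoc]
    _ = Pᵀ * (Θ * Pᵀ) := by rw [hΘP', ← hcomm]
    _ = (P * Θ * P)ᵀ := by simp [transpose_mul, hΘsym, Matrix.mul_assoc]
    _ = Pᵀ := by rw [hP2]
  -- key projection identity : Jᵀ * (Θ * P) = Jᵀ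
  have hMJ : ((1 : Matrix (Fin N) (Fin N) ℝ) - Θ * P) * J = 0 := by
    rw [← Matrix.self_mul_conjTranspose_eq_zero]
    have hT : (((1 : Matrix (Fin N) (Fin N) ℝ) - Θ * P) * J)ᴴ
        = Jᵀ * ((1 : Matrix (Fin N) (Fin N) ℝ) - Θ * P) := by
      rw [conjTranspose_eq_transpose_of_trivial, transpose_mul, transpose_sub, transpose_one, hP3]
    rw [hT]
    have key : ((1 : Matrix (Fin N) (Fin N) ℝ) - Θ * P) * Θ = 0 := by
      rw [Matrix.sub_mul, Matrix.one_mul, Matrix.mul_assoc, ← Matrix.mul_assoc, hP1, sub_self]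
    calc ((1 : Matrix (Fin N) (Fin N) ℝ) - Θ * P) * J *
          (Jᵀ * ((1 : Matrix (Fin N) (Fin N) ℝ) - Θ * P))
        = (((1 : Matrix (Fin N) (Fin N) ℝ) - Θ * P) * Θ) *
          ((1 : Matrix (Fin N) (Fin N) ℝ) - Θ * P) := by
          rw [Matrix.mul_assoc _ J _, ← Matrix.mul_assoc J Jᵀ _, ← hΘdef, ← Matrix.mul_assoc]
    _ = 0 := by rw [key, Matrix.zero_mul]
  have hJproj : Jᵀ * (Θ * P) = Jᵀ := by
    have h0 := congrArg Matrix.transpose hMJ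
    rw [transpose_mul, transpose_sub, transpose_one, hP3, transpose_zero, Matrix.mul_sub,
      Matrix.mul_one] at h0
    exact (sub_eq_zero.mp h0).symm
  -- setup
  set r0 : Fin N → ℝ := J *ᵥ h 0 - y with hr0
  set q : Fin N → ℝ := P *ᵥ r0 with hq
  set A : Matrix (Fin N) (Fin N) ℝ := (1 : Matrix (Fin N) (Fin N) ℝ) - η • Θ with hA
  have hJJ : ∀ x : Fin N → ℝ, J *ᵥ (Jᵀ *ᵥ x) = Θ *ᵥ x := fun x => by
    rw [Matrix.mulVec_mulVec, ← hΘdef]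
  have hcancel : Jᵀ *ᵥ r0 = Jᵀ *ᵥ (Θ *ᵥ q) := by
    rw [hq, Matrix.mulVec_mulVec q Jᵀ Θ, Matrix.mulVec_mulVec r0 (Jᵀ * Θ) P,
      Matrix.mul_assoc, hJproj]
  -- closed form
  have hform : ∀ t, h t = (h 0 - Jᵀ *ᵥ q) + Jᵀ *ᵥ (A ^ t *ᵥ q) := by
    intro t
    induction t with
    | zero => simp
    | succ t ih =>
      have hres : J *ᵥ h t - y = (r0 - Θ *ᵥ q) + Θ *ᵥ (A ^ t *ᵥ q) := by
        rw [ih, Matrix.mulVec_add, Matrix.mulVec_sub, hJJ, hJJ, hr0]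
        abel
      have hstep : A ^ (t + 1) *ᵥ q = A ^ t *ᵥ q - η • (Θ *ᵥ (A ^ t *ᵥ q)) := by
        rw [pow_succ', ← Matrix.mulVec_mulVec, hA, Matrix.sub_mulVec, Matrix.one_mulVec,
          Matrix.smul_mulVec]
      rw [hgd t, hres, ih, hstep]
      simp only [Matrix.mulVec_add, Matrix.mulVec_sub, Matrix.mulVec_smul]
      rw [hcancel]
      simp only [smul_sub, smul_add]
      abel
  -- spectral part
  have hΘherm : Θ.IsHermitian := by
    rw [Matrix.IsHermitian, conjTranspose_eq_transpose_of_trivial, hΘsym]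
  set U : Matrix (Fin N) (Fin N) ℝ := (hΘherm.eigenvectorUnitary : Matrix (Fin N) (Fin N) ℝ)
    with hU
  set D : Fin N → ℝ := hΘherm.eigenvalues with hD
  have hspec : Θ = U * diagonal D * star U := by
    have := hΘherm.spectral_theorem
    simpa using this
  have hUU : star U * U = 1 := by
    have := hΘherm.eigenvectorUnitary.2
    rw [Matrix.mem_unitaryGroup_iff'] at this
    exact this
  have hsUU : ∀ X : Matrix (Fin N) (Fin N) ℝ, star U * (U * X) = X := fun X => by
    rw [← Matrix.mul_assoc, hUU, Matrix.one_mul]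
  have hdiag : ∀ t, A ^ t * Θ = U * diagonal (fun i => (1 - η * D i) ^ t * D i) * star U := by
    intro t
    induction t with
    | zero => simpa using hspec
    | succ t ih =>
      have hstep : A ^ (t + 1) * Θ = A * (A ^ t * Θ) := by
        rw [pow_succ', Matrix.mul_assoc]
      rw [hstep, ih, hA, Matrix.sub_mul, Matrix.one_mul, Matrix.smul_mul, hspec]
      have hmul : U * diagonal D * star U *
            (U * diagonal (fun i => (1 - η * D i) ^ t * D i) * star U)
          = U * diagonal (fun i => D i * ((1 - η * D i) ^ t * D i)) * star U := by
        simp only [Matrix.mul_assoc]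
        rw [hsUU, ← Matrix.mul_assoc (diagonal D), Matrix.diagonal_mul_diagonal]
      rw [hmul]
      have hsmul : ∀ d : Fin N → ℝ, U * diagonal (η • d) * star U
          = η • (U * diagonal d * star U) := fun d => by
        rw [Matrix.diagonal_smul, Matrix.mul_smul, Matrix.smul_mul]
      have hsub : ∀ c d : Fin N → ℝ, U * diagonal c * star U - U * diagonal d * star U
          = U * diagonal (fun i => c i - d i) * star U := fun c d => by
        rw [← Matrix.diagonal_sub, Matrix.mul_sub, Matrix.sub_mul]
      rw [← hsmul, hsub]
      refine congrArg (fun M => U * M * star U) ?_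
      rw [Matrix.diagonal_eq_diagonal_iff]
      intro i
      simp only [Pi.smul_apply, smul_eq_mul]
      ring
  have hc0 : Tendsto (fun t : ℕ => (fun i => (1 - η * D i) ^ t * D i)) atTop
      (nhds (0 : Fin N → ℝ)) := by
    rw [tendsto_pi_nhds]
    intro i
    by_cases hDi : D i = 0
    · simp only [hDi, mul_zero, Pi.zero_apply]
      exact tendsto_const_nhds
    · have hmem := hΘherm.eigenvalues_mem_spectrum_real i
      have hμ := heig (D i) hmem hDi
      have habs : |1 - η * D i| < 1 := abs_lt.mpr ⟨by linarith [hμ.2], by linarith [hμ.1]⟩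
      have := (tendsto_pow_atTop_nhds_zero_iff.mpr habs).mul_const (D i)
      simpa using this
  have hMat : Tendsto (fun t : ℕ => A ^ t * Θ) atTop (nhds 0) := by
    have hcont : Continuous (fun c : Fin N → ℝ => U * diagonal c * star U) :=
      (continuous_const.matrix_mul (continuous_id.matrix_diagonal)).matrix_mul continuous_const
    have htd := (hcont.tendsto 0).comp hc0
    have h0 : U * diagonal (0 : Fin N → ℝ) * star U = 0 := by
      rw [show (0 : Fin N → ℝ) = (fun _ => (0 : ℝ)) from rfl, Matrix.diagonal_zero,
        Matrix.mul_zero, Matrix.zero_mul]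
    rw [h0] at htd
    exact htd.congr fun t => (hdiag t).symm
  -- q is in the range of Θ
  have hPfac : P = Θ * (P * P) := by
    calc P = P * Θ * P := hP2.symm
    _ = (Θ * P) * P := by rw [hcomm]
    _ = Θ * (P * P) := by rw [Matrix.mul_assoc]
  set z : Fin N → ℝ := (P * P) *ᵥ r0 with hz
  have hqz : q = Θ *ᵥ z := by
    rw [hq, hz, Matrix.mulVec_mulVec, ← hPfac]
  have htend0 : Tendsto (fun t : ℕ => Jᵀ *ᵥ (A ^ t *ᵥ q)) atTop (nhds 0) := by
    have hcont2 : Continuous (fun M : Matrix (Fin N) (Fin N) ℝ => Jᵀ *ᵥ (M *ᵥ z)) :=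
      continuous_const.matrix_mulVec (continuous_id.matrix_mulVec continuous_const)
    have htd := (hcont2.tendsto 0).comp hMat
    have h0 : Jᵀ *ᵥ ((0 : Matrix (Fin N) (Fin N) ℝ) *ᵥ z) = 0 := by simp
    rw [h0] at htd
    have htd' : Tendsto (fun t : ℕ => Jᵀ *ᵥ ((A ^ t * Θ) *ᵥ z)) atTop (nhds 0) := htd
    refine htd'.congr fun t => ?_
    rw [hqz, Matrix.mulVec_mulVec z (A ^ t) Θ]
  have hlimit : P *ᵥ (y - J *ᵥ h 0) = -q := by
    rw [hq, hr0, show y - J *ᵥ h 0 = -(J *ᵥ h 0 - y) by abel, Matrix.mulVec_neg]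
  constructor
  · have htd : Tendsto (fun t => (h 0 - Jᵀ *ᵥ q) + Jᵀ *ᵥ (A ^ t *ᵥ q)) atTop
        (nhds ((h 0 - Jᵀ *ᵥ q) + 0)) := tendsto_const_nhds.add htend0
    rw [add_zero] at htd
    have hval : h 0 + Jᵀ *ᵥ (P *ᵥ (y - J *ᵥ h 0)) = h 0 - Jᵀ *ᵥ q := by
      rw [hlimit, Matrix.mulVec_neg]
      abel
    rw [hval]
    exact htd.congr fun t => (hform t).symm
  · intro h0eq
    have hy : y - J *ᵥ h 0 = y := by rw [h0eq, sub_zero]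
    rw [hy]
    have hv : Jᵀ *ᵥ (P *ᵥ y) = (Jᵀ * P) *ᵥ y := Matrix.mulVec_mulVec y Jᵀ P
    have hsum : ∑ i, (Jᵀ *ᵥ (P *ᵥ y)) i ^ 2 = (Jᵀ *ᵥ (P *ᵥ y)) ⬝ᵥ (Jᵀ *ᵥ (P *ᵥ y)) := by
      simp [dotProduct, sq]
    rw [hsum, hv]
    have hdp : ((Jᵀ * P) *ᵥ y) ⬝ᵥ ((Jᵀ * P) *ᵥ y) = y ⬝ᵥ (((Jᵀ * P)ᵀ * (Jᵀ * P)) *ᵥ y) := by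
      rw [Matrix.dotProduct_mulVec, ← Matrix.mulVec_transpose, Matrix.mulVec_mulVec,
        dotProduct_comm]
    rw [hdp]
    congr 1
    rw [transpose_mul, ← hPsym, transpose_transpose, Matrix.mul_assoc, ← Matrix.mul_assoc J Jᵀ P,
      ← hΘdef, ← Matrix.mul_assoc, hP2]
end
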